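/- arXiv:2511.18247 — 4 statements merged into one kernel-verified Lean document; each statement's English description precedes it below -/
import Mathlib

section
/- Let H, S, K be integers with H ≥ 2, S ≥ 1, K ≥ 1, let h be an integer with 0 ≤ h ≤ H−2, let μ > 0 and α, γ ∈ [0,1] be real numbers, and define the K-independent bonus b^k(n) = (H−h−1)·√((0.5·S·ln 2 + μ·(k+1)^α)/n) for integers k ≥ 0 and n ≥ 1. Then ∑_{n=1}^{K} exp(−2n·(b^{max(n, ⌈K^γ⌉)}(n)/(H−h−1))²) ≤ 2^{−S}·K·exp(−2μ·K^{γα}). -/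
/-! The normalised bonus squared is exactly `(S/2 · log 2 + μ (k+1)^α) / n`, so the `n`-th term is
`2^{-S} · exp (-2μ (k+1)^α)` with `k = max n ⌈K^γ⌉`. Since `k + 1 ≥ K^γ`, every term is at most
`2^{-S} · exp (-2μ K^{γα})`, and there are `K` of them. -/

open Real

lemma exp_neg_two_mul_log_two_bonus (S x : ℝ) {n : ℝ} (hn : n ≠ 0) :
    exp (-2 * n * ((0.5 * S * log 2 + x) / n)) = (2 : ℝ) ^ (-S) * exp (-2 * x) := by
  rw [rpow_def_of_pos two_pos, ← exp_add]
  congr 1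
  field_simp
  ring

lemma rpow_mul_le_ceil_rpow_add_one {x γ α : ℝ} (hx : 0 ≤ x) (hα : 0 ≤ α) {k : ℕ}
    (hk : ⌈x ^ γ⌉₊ ≤ k) : x ^ (γ * α) ≤ ((k : ℝ) + 1) ^ α := by
  have hle : x ^ γ ≤ (k : ℝ) + 1 :=
    calc x ^ γ ≤ ⌈x ^ γ⌉₊ := Nat.le_ceil _
      _ ≤ k := by exact_mod_cast hk
      _ ≤ (k : ℝ) + 1 := le_add_of_nonneg_right zero_le_one
  rw [rpow_mul hx]
  exact rpow_le_rpow (rpow_nonneg hx γ) hle hα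

theorem bonus_sum_bound_K_independent_general
    (H S K : ℕ) (hH : 2 ≤ H)
    (h : ℕ) (hh : h ≤ H - 2) (μ α γ : ℝ) (hμ : 0 < μ)
    (hα : α ∈ Set.Icc (0 : ℝ) 1)
    (b : ℕ → ℕ → ℝ)
    (hb : ∀ k n : ℕ, 1 ≤ n →
      b k n = ((H : ℝ) - h - 1) *
        Real.sqrt ((0.5 * S * Real.log 2 + μ * ((k : ℝ) + 1) ^ α) / n)) :
    ∑ n ∈ Finset.Icc 1 K,
        Real.exp (-2 * n *
          (b (max n ⌈(K : ℝ) ^ γ⌉₊) n / ((H : ℝ) - h - 1)) ^ 2)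
      ≤ (2 : ℝ) ^ (-(S : ℝ)) * K * Real.exp (-2 * μ * (K : ℝ) ^ (γ * α)) := by
  have hscale : (H : ℝ) - h - 1 ≠ 0 := by
    have : h + 2 ≤ H := by omega
    have : (h : ℝ) + 2 ≤ H := by exact_mod_cast this
    linarith
  have hterm : ∀ n ∈ Finset.Icc 1 K,
      exp (-2 * n * (b (max n ⌈(K : ℝ) ^ γ⌉₊) n / ((H : ℝ) - h - 1)) ^ 2)
        ≤ (2 : ℝ) ^ (-(S : ℝ)) * exp (-2 * μ * (K : ℝ) ^ (γ * α)) := by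
    intro n hn
    have hn1 : 1 ≤ n := (Finset.mem_Icc.1 hn).1
    have hk : (K : ℝ) ^ (γ * α) ≤ ((max n ⌈(K : ℝ) ^ γ⌉₊ : ℕ) + 1) ^ α :=
      rpow_mul_le_ceil_rpow_add_one K.cast_nonneg hα.1 (le_max_right _ _)
    rw [hb _ _ hn1, mul_div_cancel_left₀ _ hscale, sq_sqrt (by positivity),
      exp_neg_two_mul_log_two_bonus _ _ (by positivity)]
    gcongr _ * ?_
    exact exp_le_exp.2 (by nlinarith)
  calc _ ≤ (Finset.Icc 1 K).card • ((2 : ℝ) ^ (-(S : ℝ)) * exp (-2 * μ * (K : ℝ) ^ (γ * α))) :=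
        Finset.sum_le_card_nsmul _ _ _ hterm
    _ = _ := by rw [Nat.card_Icc, nsmul_eq_mul]; push_cast; ring

/-- Lemma 1 of the paper, K-independent case.
The K-independent bonus-sum bound. -/
theorem bonus_sum_bound_K_independent
    (H S K : ℕ) (hH : 2 ≤ H) (hS : 1 ≤ S) (hK : 1 ≤ K)
    (h : ℕ) (hh : h ≤ H - 2) (μ α γ : ℝ) (hμ : 0 < μ)
    (hα : α ∈ Set.Icc (0 : ℝ) 1) (hγ : γ ∈ Set.Icc (0 : ℝ) 1)
    (b : ℕ → ℕ → ℝ)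
    (hb : ∀ k n : ℕ, 1 ≤ n →
      b k n = ((H : ℝ) - h - 1) *
        Real.sqrt ((0.5 * S * Real.log 2 + μ * ((k : ℝ) + 1) ^ α) / n)) :
    ∑ n ∈ Finset.Icc 1 K,
        Real.exp (-2 * n *
          (b (max n ⌈(K : ℝ) ^ γ⌉₊) n / ((H : ℝ) - h - 1)) ^ 2)
      ≤ (2 : ℝ) ^ (-(S : ℝ)) * K * Real.exp (-2 * μ * (K : ℝ) ^ (γ * α)) :=
  bonus_sum_bound_K_independent_general H S K hH h hh μ α γ hμ hα b hb
end

section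
/- Let (𝒮, 𝒜, P*, r, H) be a finite-horizon MDP with global Q*-gap gap* > 0, and let (P̃, r̃) be another transition kernel and reward function on the same (𝒮, 𝒜, H) such that for all (s,a) and all h with 0 ≤ h ≤ H−2, ‖P̃_h(·|s,a) − P*_h(·|s,a)‖₁ ≤ gap*/(2H(H−h−1)) and |r̃_h(s,a) − r_h(s,a)| ≤ gap*/(4H), and such that r̃_{H−1} = r_{H−1}. Then for every (s,h), the set of optimal actions Ã*_h(s) of the MDP (𝒮,𝒜,P̃,r̃,H) is contained in the set of optimal actions A*_h(s) of (𝒮,𝒜,P*,r,H); in particular, every deterministic Markov policy that is optimal for (P̃,r̃) satisfies π_h(s) ∈ A*_h(s) for all (s,h), i.e., it is optimal for (P*,r). -/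
/-- A probability mass function on a finite type, as a real-valued function. -/
def IsPMF {S : Type*} [Fintype S] (p : S → ℝ) : Prop :=
  (∀ s, 0 ≤ p s) ∧ ∑ s, p s = 1

/-- ℓ₁ distance between two functions on a finite type. -/
noncomputable def l1dist {S : Type*} [Fintype S] (p q : S → ℝ) : ℝ :=
  ∑ s, |p s - q s|

/-- Value function of a deterministic Markov policy, by backward recursion on the
number `t` of remaining steps; the value at stage `h` with horizon `H` is
`Vpi P r pol (H - h) h`. -/
noncomputable def Vpi {S A : Type*} [Fintype S]
    (P : ℕ → S → A → S → ℝ) (r : ℕ → S → A → ℝ) (pol : ℕ → S → A) :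
    ℕ → ℕ → S → ℝ
  | 0, _, _ => 0
  | t + 1, h, s =>
      r h s (pol h s) + ∑ s' : S, P h s (pol h s) s' * Vpi P r pol t (h + 1) s'

/-- Action-value function of a deterministic Markov policy in the horizon-`H` MDP. -/
noncomputable def Qpi {S A : Type*} [Fintype S]
    (P : ℕ → S → A → S → ℝ) (r : ℕ → S → A → ℝ) (pol : ℕ → S → A)
    (H h : ℕ) (s : S) (a : A) : ℝ :=
  r h s a + ∑ s' : S, P h s a s' * Vpi P r pol (H - (h + 1)) (h + 1) s'

/-- Optimal value function: supremum over all deterministic Markov policies. -/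
noncomputable def Vstar {S A : Type*} [Fintype S]
    (P : ℕ → S → A → S → ℝ) (r : ℕ → S → A → ℝ) (H h : ℕ) (s : S) : ℝ :=
  ⨆ pol : ℕ → S → A, Vpi P r pol (H - h) h s

/-- Optimal action-value function. -/
noncomputable def Qstar {S A : Type*} [Fintype S]
    (P : ℕ → S → A → S → ℝ) (r : ℕ → S → A → ℝ) (H h : ℕ) (s : S) (a : A) : ℝ :=
  r h s a + ∑ s' : S, P h s a s' * Vstar P r H (h + 1) s'

/-- The set of optimal actions `A*_h(s) = argmax_a Q*_h(s,a)`. -/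
def OptActions {S A : Type*} [Fintype S]
    (P : ℕ → S → A → S → ℝ) (r : ℕ → S → A → ℝ) (H h : ℕ) (s : S) : Set A :=
  {a | ∀ a', Qstar P r H h s a' ≤ Qstar P r H h s a}

/-!
Write `Q*` and `Q̃*` for the optimal action values of the true and the perturbed MDP. Both
satisfy the Bellman recursion, and each backup step adds at most
`|r̃ - r| + ‖P̃ - P‖₁ · (H - h - 1) / 2 ≤ gap*/(2H)` to their difference: the value function
being averaged takes values in `[0, H - h - 1]`, and centring it at the midpoint of this interval
halves the `ℓ₁` factor. Since the last stage carries no error,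
`|Q̃*_h - Q*_h| ≤ (H - h - 1) · gap*/(2H) < gap*/2`, so an action that maximises `Q̃*_h` comes
within less than `gap*` of the maximum of `Q*_h`, hence is optimal for `Q*_h`.
-/

open Finset

section FiniteSums

variable {S : Type*} [Fintype S]

theorem sum_pmf_mul_mem_Icc {p V : S → ℝ} {M : ℝ} (hp : IsPMF p)
    (hV : ∀ s, V s ∈ Set.Icc 0 M) : ∑ s, p s * V s ∈ Set.Icc 0 M := by
  refine ⟨sum_nonneg fun s _ => mul_nonneg (hp.1 s) (hV s).1, ?_⟩
  calc ∑ s, p s * V s ≤ ∑ s, p s * M :=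
        sum_le_sum fun s _ => mul_le_mul_of_nonneg_left (hV s).2 (hp.1 s)
    _ = M := by rw [← sum_mul, hp.2, one_mul]

theorem abs_sum_mul_sub_sum_mul_le {p q V : S → ℝ} {M : ℝ} (hpq : ∑ s, p s = ∑ s, q s)
    (hV : ∀ s, V s ∈ Set.Icc 0 M) :
    |∑ s, p s * V s - ∑ s, q s * V s| ≤ l1dist p q * (M / 2) := by
  have hcentre : ∑ s, p s * V s - ∑ s, q s * V s = ∑ s, (p s - q s) * (V s - M / 2) := by
    simp only [sub_mul, mul_sub, sum_sub_distrib, ← sum_mul, hpq]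
    ring
  rw [hcentre, l1dist, sum_mul]
  refine (abs_sum_le_sum_abs _ _).trans (sum_le_sum fun s _ => ?_)
  rw [abs_mul]
  refine mul_le_mul_of_nonneg_left (abs_le.2 ⟨?_, ?_⟩) (abs_nonneg _) <;>
    linarith [(hV s).1, (hV s).2]

theorem abs_sum_pmf_mul_sub_le {q V W : S → ℝ} {Δ : ℝ} (hq : IsPMF q)
    (hVW : ∀ s, |V s - W s| ≤ Δ) : |∑ s, q s * V s - ∑ s, q s * W s| ≤ Δ := by
  rw [← sum_sub_distrib]
  calc |∑ s, (q s * V s - q s * W s)| ≤ ∑ s, |q s * V s - q s * W s| := abs_sum_le_sum_abs _ _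
    _ ≤ ∑ s, q s * Δ := sum_le_sum fun s _ => by
        rw [← mul_sub, abs_mul, abs_of_nonneg (hq.1 s)]
        exact mul_le_mul_of_nonneg_left (hVW s) (hq.1 s)
    _ = Δ := by rw [← sum_mul, hq.2, one_mul]

theorem abs_backup_sub_backup_le {p q V W : S → ℝ} {x y M Δ : ℝ} (hp : IsPMF p)
    (hq : IsPMF q) (hV : ∀ s, V s ∈ Set.Icc 0 M) (hVW : ∀ s, |V s - W s| ≤ Δ) :
    |(x + ∑ s, p s * V s) - (y + ∑ s, q s * W s)| ≤ |x - y| + l1dist p q * (M / 2) + Δ := by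
  have hsplit : (x + ∑ s, p s * V s) - (y + ∑ s, q s * W s) =
      (x - y) + (∑ s, p s * V s - ∑ s, q s * V s) + (∑ s, q s * V s - ∑ s, q s * W s) := by
    ring
  rw [hsplit]
  refine (abs_add_three _ _ _).trans ?_
  gcongr
  · exact abs_sum_mul_sub_sum_mul_le (hp.2.trans hq.2.symm) hV
  · exact abs_sum_pmf_mul_sub_le hq hVW

end FiniteSums

theorem abs_ciSup_sub_ciSup_le {ι : Type*} [Finite ι] [Nonempty ι] {f g : ι → ℝ} {c : ℝ}
    (hfg : ∀ i, |f i - g i| ≤ c) : |(⨆ i, f i) - ⨆ i, g i| ≤ c := by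
  have hle : ∀ f g : ι → ℝ, (∀ i, |f i - g i| ≤ c) →
      (⨆ i, f i) ≤ (⨆ i, g i) + c :=
    fun f g hfg => ciSup_le fun i =>
      by linarith [(abs_le.1 (hfg i)).2, le_ciSup (Finite.bddAbove_range g) i]
  have hge := hle g f fun i => abs_sub_comm (f i) (g i) ▸ hfg i
  exact abs_le.2 ⟨by linarith, by linarith [hle f g hfg]⟩

section Bellman

variable {S A : Type*} [Fintype S]

noncomputable def bellmanValue (P : ℕ → S → A → S → ℝ) (r : ℕ → S → A → ℝ) :
    ℕ → ℕ → S → ℝ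
  | 0, _, _ => 0
  | t + 1, h, s => ⨆ a : A, (r h s a + ∑ s', P h s a s' * bellmanValue P r t (h + 1) s')

variable [Fintype A] {P : ℕ → S → A → S → ℝ} {r : ℕ → S → A → ℝ} {H : ℕ}

theorem Vpi_le_bellmanValue (hP : ∀ h, h + 1 < H → ∀ s a s', 0 ≤ P h s a s')
    (pol : ℕ → S → A) :
    ∀ t h, h + t ≤ H → ∀ s, Vpi P r pol t h s ≤ bellmanValue P r t h s
  | 0, _, _, _ => by simp [Vpi, bellmanValue]
  | t + 1, h, hh, s => by
    have hnext : ∑ s', P h s (pol h s) s' * Vpi P r pol t (h + 1) s' ≤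
        ∑ s', P h s (pol h s) s' * bellmanValue P r t (h + 1) s' := by
      refine sum_le_sum fun s' _ => ?_
      rcases t.eq_zero_or_pos with rfl | ht
      · simp [Vpi, bellmanValue]
      · exact mul_le_mul_of_nonneg_left (Vpi_le_bellmanValue hP pol t (h + 1) (by omega) s')
          (hP h (by omega) s _ s')
    rw [Vpi, bellmanValue]
    exact le_ciSup_of_le (Finite.bddAbove_range _) (pol h s) (by linarith)

variable [Nonempty A]

theorem bellmanValue_mem_Icc (hP : ∀ h, h + 1 < H → ∀ s a, IsPMF (P h s a))
    (hr : ∀ h, h < H → ∀ s a, r h s a ∈ Set.Icc (0 : ℝ) 1) :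
    ∀ t h, h + t ≤ H → ∀ s, bellmanValue P r t h s ∈ Set.Icc (0 : ℝ) t
  | 0, _, _, _ => by simp [bellmanValue]
  | t + 1, h, hh, s => by
    have hnext : ∀ a,
        ∑ s', P h s a s' * bellmanValue P r t (h + 1) s' ∈ Set.Icc (0 : ℝ) t := by
      intro a
      rcases t.eq_zero_or_pos with rfl | ht
      · simp [bellmanValue]
      · exact sum_pmf_mul_mem_Icc (hP h (by omega) s a)
          (bellmanValue_mem_Icc hP hr t (h + 1) (by omega))
    have hbackup : ∀ a, r h s a + ∑ s', P h s a s' * bellmanValue P r t (h + 1) s' ∈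
        Set.Icc (0 : ℝ) (t + 1) := fun a =>
      ⟨add_nonneg (hr h (by omega) s a).1 (hnext a).1,
        by linarith [(hr h (by omega) s a).2, (hnext a).2]⟩
    push_cast
    exact ⟨le_ciSup_of_le (Finite.bddAbove_range _) (Classical.arbitrary A)
      (hbackup (Classical.arbitrary A)).1, ciSup_le fun a => (hbackup a).2⟩

variable (P r H) in
noncomputable def greedyPolicy (h : ℕ) (s : S) : A :=
  (exists_eq_ciSup_of_finite (f := fun a =>
    r h s a + ∑ s', P h s a s' * bellmanValue P r (H - (h + 1)) (h + 1) s')).choose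

theorem greedyPolicy_backup_eq_iSup (h : ℕ) (s : S) :
    r h s (greedyPolicy P r H h s) +
        ∑ s', P h s (greedyPolicy P r H h s) s' * bellmanValue P r (H - (h + 1)) (h + 1) s' =
      ⨆ a, (r h s a + ∑ s', P h s a s' * bellmanValue P r (H - (h + 1)) (h + 1) s') :=
  (exists_eq_ciSup_of_finite (f := fun a =>
    r h s a + ∑ s', P h s a s' * bellmanValue P r (H - (h + 1)) (h + 1) s')).choose_spec

theorem Vpi_greedyPolicy : ∀ t h, h + t = H → ∀ s,
    Vpi P r (greedyPolicy P r H) t h s = bellmanValue P r t h s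
  | 0, _, _, _ => by simp [Vpi, bellmanValue]
  | t + 1, h, hh, s => by
    have hgreedy := greedyPolicy_backup_eq_iSup (P := P) (r := r) (H := H) h s
    rw [show H - (h + 1) = t by omega] at hgreedy
    simp only [Vpi, bellmanValue, Vpi_greedyPolicy t (h + 1) (by omega)]
    exact hgreedy

theorem Vstar_eq_bellmanValue (hP : ∀ h, h + 1 < H → ∀ s a s', 0 ≤ P h s a s') {h : ℕ}
    (hh : h ≤ H) (s : S) : Vstar P r H h s = bellmanValue P r (H - h) h s := by
  have hle : ∀ pol, Vpi P r pol (H - h) h s ≤ bellmanValue P r (H - h) h s :=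
    fun pol => Vpi_le_bellmanValue hP pol (H - h) h (by omega) s
  refine le_antisymm (ciSup_le hle) ?_
  rw [← Vpi_greedyPolicy (H := H) (H - h) h (by omega) s]
  exact le_ciSup ⟨_, Set.forall_mem_range.2 hle⟩ _

theorem Qstar_eq_backup (hP : ∀ h, h + 1 < H → ∀ s a s', 0 ≤ P h s a s') {h : ℕ}
    (hh : h < H) (s : S) (a : A) : Qstar P r H h s a =
      r h s a + ∑ s', P h s a s' * bellmanValue P r (H - (h + 1)) (h + 1) s' := by
  simp only [Qstar, Vstar_eq_bellmanValue hP (Nat.succ_le_of_lt hh)]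

theorem Vstar_eq_iSup_Qstar (hP : ∀ h, h + 1 < H → ∀ s a s', 0 ≤ P h s a s') {h : ℕ}
    (hh : h < H) (s : S) : Vstar P r H h s = ⨆ a, Qstar P r H h s a := by
  rw [Vstar_eq_bellmanValue hP hh.le, show H - h = H - (h + 1) + 1 by omega, bellmanValue]
  simp only [Qstar_eq_backup hP hh]

theorem mem_OptActions_of_Vpi_eq_Vstar (hP : ∀ h, h + 1 < H → ∀ s a s', 0 ≤ P h s a s')
    {pol : ℕ → S → A}
    (hpol : ∀ h, h < H → ∀ s, Vpi P r pol (H - h) h s = Vstar P r H h s)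
    {h : ℕ} (hh : h < H) (s : S) : pol h s ∈ OptActions P r H h s := by
  have hnext : ∀ s', Vpi P r pol (H - (h + 1)) (h + 1) s' = Vstar P r H (h + 1) s' := by
    intro s'
    rcases (Nat.succ_le_of_lt hh).lt_or_eq with hlt | heq
    · exact hpol (h + 1) hlt s'
    · obtain rfl : H = h + 1 := heq.symm
      simp [Vstar_eq_bellmanValue hP le_rfl, Vpi, bellmanValue]
  have hQ : Qstar P r H h s (pol h s) = Vstar P r H h s := by
    rw [← hpol h hh s, show H - h = H - (h + 1) + 1 by omega, Vpi, Qstar]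
    simp only [hnext]
  intro a
  rw [hQ, Vstar_eq_iSup_Qstar hP hh]
  exact le_ciSup (Finite.bddAbove_range _) a

end Bellman

section Perturbation

variable {S A : Type*} [Fintype S] [Fintype A] [Nonempty A]
  {P P' : ℕ → S → A → S → ℝ} {r r' : ℕ → S → A → ℝ} {H : ℕ} {ε : ℝ}
  (hP : ∀ h, h + 1 < H → ∀ s a, IsPMF (P h s a))
  (hP' : ∀ h, h + 1 < H → ∀ s a, IsPMF (P' h s a))
  (hr' : ∀ h, h < H → ∀ s a, r' h s a ∈ Set.Icc (0 : ℝ) 1)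
  (hstep : ∀ h, h + 1 < H → ∀ s a,
    |r' h s a - r h s a| + l1dist (P' h s a) (P h s a) * ((H - (h + 1) : ℕ) / 2) ≤ ε)
  (hlast : ∀ s a, r' (H - 1) s a = r (H - 1) s a)
include hP hP' hr' hstep hlast

theorem abs_bellmanValue_sub_le : ∀ t h, h + t = H → ∀ s,
    |bellmanValue P' r' t h s - bellmanValue P r t h s| ≤ ((t - 1 : ℕ) : ℝ) * ε
  | 0, _, _, _ => by simp [bellmanValue]
  | 1, h, hh, s => by
    simp [bellmanValue, show h = H - 1 by omega, hlast]
  | t + 2, h, hh, s => by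
    rw [bellmanValue, bellmanValue]
    refine abs_ciSup_sub_ciSup_le fun a => ?_
    have hbackup := abs_backup_sub_backup_le (x := r' h s a) (y := r h s a)
      (hP' h (by omega) s a) (hP h (by omega) s a)
      (bellmanValue_mem_Icc hP' hr' (t + 1) (h + 1) (by omega))
      (abs_bellmanValue_sub_le (t + 1) (h + 1) (by omega))
    have hε := hstep h (by omega) s a
    rw [show H - (h + 1) = t + 1 by omega] at hε
    push_cast at hbackup hε ⊢
    linarith

theorem abs_Qstar_sub_le {h : ℕ} (hh : h < H) (s : S) (a : A) :
    |Qstar P' r' H h s a - Qstar P r H h s a| ≤ ((H - (h + 1) : ℕ) : ℝ) * ε := by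
  have hPnonneg := fun h hh s a => (hP h hh s a).1
  have hP'nonneg := fun h hh s a => (hP' h hh s a).1
  rw [Qstar_eq_backup hPnonneg hh, Qstar_eq_backup hP'nonneg hh]
  rcases (Nat.succ_le_of_lt hh).lt_or_eq with hlt | heq
  · have hbackup := abs_backup_sub_backup_le (x := r' h s a) (y := r h s a)
      (hP' h hlt s a) (hP h hlt s a)
      (bellmanValue_mem_Icc hP' hr' (H - (h + 1)) (h + 1) (by omega))
      (abs_bellmanValue_sub_le hP hP' hr' hstep hlast (H - (h + 1)) (h + 1) (by omega))
    have hcast : ((H - (h + 1) - 1 : ℕ) : ℝ) = ((H - (h + 1) : ℕ) : ℝ) - 1 := by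
      rw [Nat.cast_sub (by omega), Nat.cast_one]
    rw [hcast] at hbackup
    linarith [hstep h hlt s a]
  · obtain rfl : H = h + 1 := heq.symm
    simpa [bellmanValue, sub_eq_zero] using hlast s a

end Perturbation

theorem forall_le_of_abs_sub_le_of_gap {ι : Type*} [Finite ι] [Nonempty ι] {f g : ι → ℝ}
    {δ γ : ℝ} {i : ι} (hgi : ∀ j, g j ≤ g i) (hfg : ∀ j, |g j - f j| ≤ δ)
    (hgap : ¬ (∀ j, f j ≤ f i) → γ ≤ (⨆ j, f j) - f i) (hδ : 2 * δ < γ) :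
    ∀ j, f j ≤ f i := by
  by_contra hi
  obtain ⟨j, hj⟩ := exists_eq_ciSup_of_finite (f := f)
  linarith [hgap hi, abs_le.1 (hfg i), abs_le.1 (hfg j), hgi j]

theorem one_step_error_le {x d g : ℝ} {H h : ℕ} (hh : h + 1 < H) (hx : x ≤ g / (4 * H))
    (hd : d ≤ g / (2 * H * ((H : ℝ) - h - 1))) :
    x + d * ((H - (h + 1) : ℕ) / 2) ≤ g / (2 * H) := by
  have hcast : ((H - (h + 1) : ℕ) : ℝ) = H - h - 1 := by
    rw [Nat.cast_sub hh.le]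
    push_cast
    ring
  have hpos : (0 : ℝ) < H - h - 1 := by
    rw [← hcast]
    exact_mod_cast Nat.sub_pos_of_lt hh
  rw [hcast]
  calc _ ≤ g / (4 * H) + g / (2 * H * (H - h - 1)) * ((H - h - 1) / 2) := by gcongr
    _ = g / (2 * H) := by
        field_simp
        ring

theorem two_mul_remaining_mul_div_lt {g : ℝ} {H h : ℕ} (hh : h < H) (hg : 0 < g) :
    2 * (((H - (h + 1) : ℕ) : ℝ) * (g / (2 * H))) < g := by
  have hH : (0 : ℝ) < H := by exact_mod_cast hh.pos
  have hn : ((H - (h + 1) : ℕ) : ℝ) < H := by exact_mod_cast Nat.sub_lt hh.pos h.succ_pos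
  calc 2 * (((H - (h + 1) : ℕ) : ℝ) * (g / (2 * H))) = g * ((H - (h + 1) : ℕ) / H) := by
        field_simp
    _ < g := mul_lt_of_lt_one_right hg ((div_lt_one hH).2 hn)

theorem optimal_actions_of_perturbed_subset_general
    {𝒮 𝒜 : Type*} [Fintype 𝒮] [Fintype 𝒜] [Nonempty 𝒜]
    (H : ℕ)
    (Pstar : ℕ → 𝒮 → 𝒜 → 𝒮 → ℝ) (r : ℕ → 𝒮 → 𝒜 → ℝ)
    (Pt : ℕ → 𝒮 → 𝒜 → 𝒮 → ℝ) (rt : ℕ → 𝒮 → 𝒜 → ℝ)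
    (hPstar : ∀ h, h + 1 < H → ∀ s a, IsPMF (Pstar h s a))
    (hPt : ∀ h, h + 1 < H → ∀ s a, IsPMF (Pt h s a))
    (hrt : ∀ h, h < H → ∀ s a, rt h s a ∈ Set.Icc (0 : ℝ) 1)
    (gapstar : ℝ) (hgap_pos : 0 < gapstar)
    (hgap : ∀ h, h < H → ∀ s a, a ∉ OptActions Pstar r H h s →
      gapstar ≤ (⨆ a', Qstar Pstar r H h s a') - Qstar Pstar r H h s a)
    (hPclose : ∀ h, h + 1 < H → ∀ s a,
      l1dist (Pt h s a) (Pstar h s a) ≤ gapstar / (2 * H * ((H : ℝ) - h - 1)))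
    (hrclose : ∀ h, h + 1 < H → ∀ s a,
      |rt h s a - r h s a| ≤ gapstar / (4 * H))
    (hrlast : ∀ s a, rt (H - 1) s a = r (H - 1) s a) :
    (∀ h, h < H → ∀ s, OptActions Pt rt H h s ⊆ OptActions Pstar r H h s) ∧
    (∀ pol : ℕ → 𝒮 → 𝒜,
      (∀ h, h < H → ∀ s, Vpi Pt rt pol (H - h) h s = Vstar Pt rt H h s) →
      ∀ h, h < H → ∀ s, pol h s ∈ OptActions Pstar r H h s) := by
  have hstep := fun h hh s a => one_step_error_le hh (hrclose h hh s a) (hPclose h hh s a)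
  have hsubset : ∀ h, h < H → ∀ s, OptActions Pt rt H h s ⊆ OptActions Pstar r H h s :=
    fun h hh s a ha => forall_le_of_abs_sub_le_of_gap ha
      (fun a' => abs_Qstar_sub_le hPstar hPt hrt hstep hrlast hh s a') (hgap h hh s a)
      (two_mul_remaining_mul_div_lt hh hgap_pos)
  exact ⟨hsubset, fun pol hpol h hh s =>
    hsubset h hh s (mem_OptActions_of_Vpi_eq_Vstar (fun h hh s a => (hPt h hh s a).1) hpol hh s)⟩

/-- Lemma 2 of the paper.
If `(P̃, r̃)` is close to `(P*, r)` relative to the global `Q*`-gap, then every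
optimal action of the perturbed MDP is optimal for the true MDP; in particular any
deterministic Markov policy optimal for `(P̃, r̃)` is optimal for `(P*, r)`. -/
theorem optimal_actions_of_perturbed_subset
    {𝒮 𝒜 : Type*} [Fintype 𝒮] [Fintype 𝒜] [Nonempty 𝒮] [Nonempty 𝒜]
    (H : ℕ) (hH : 1 ≤ H)
    (Pstar : ℕ → 𝒮 → 𝒜 → 𝒮 → ℝ) (r : ℕ → 𝒮 → 𝒜 → ℝ)
    (Pt : ℕ → 𝒮 → 𝒜 → 𝒮 → ℝ) (rt : ℕ → 𝒮 → 𝒜 → ℝ)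
    (hPstar : ∀ h, h + 1 < H → ∀ s a, IsPMF (Pstar h s a))
    (hPt : ∀ h, h + 1 < H → ∀ s a, IsPMF (Pt h s a))
    (hr : ∀ h, h < H → ∀ s a, r h s a ∈ Set.Icc (0 : ℝ) 1)
    (hrt : ∀ h, h < H → ∀ s a, rt h s a ∈ Set.Icc (0 : ℝ) 1)
    (gapstar : ℝ) (hgap_pos : 0 < gapstar)
    (hgap : ∀ h, h < H → ∀ s a, a ∉ OptActions Pstar r H h s →
      gapstar ≤ (⨆ a', Qstar Pstar r H h s a') - Qstar Pstar r H h s a)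
    (hPclose : ∀ h, h + 1 < H → ∀ s a,
      l1dist (Pt h s a) (Pstar h s a) ≤ gapstar / (2 * H * ((H : ℝ) - h - 1)))
    (hrclose : ∀ h, h + 1 < H → ∀ s a,
      |rt h s a - r h s a| ≤ gapstar / (4 * H))
    (hrlast : ∀ s a, rt (H - 1) s a = r (H - 1) s a) :
    (∀ h, h < H → ∀ s, OptActions Pt rt H h s ⊆ OptActions Pstar r H h s) ∧
    (∀ pol : ℕ → 𝒮 → 𝒜,
      (∀ h, h < H → ∀ s, Vpi Pt rt pol (H - h) h s = Vstar Pt rt H h s) →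
      ∀ h, h < H → ∀ s, pol h s ∈ OptActions Pstar r H h s) :=
  optimal_actions_of_perturbed_subset_general H Pstar r Pt rt hPstar hPt hrt gapstar hgap_pos hgap
    hPclose hrclose hrlast
end

section
/- Let (𝒮, 𝒜, P*, r, H) be a finite-horizon MDP with global Q*-gap gap* > 0, and let (P̃, r̃) satisfy, for all (s,a) and all h with 0 ≤ h ≤ H−2, ‖P̃_h(·|s,a) − P*_h(·|s,a)‖₁ ≤ gap*/(2H(H−h−1)) and |r̃_h(s,a) − r_h(s,a)| ≤ gap*/(4H), with r̃_{H−1} = r_{H−1}. Then for every deterministic Markov policy π, every h ∈ {0,…,H−1}, and every (s,a): |Q_h^{π,P̃,r̃}(s,a) − Q_h^{π,P*,r}(s,a)| ≤ (H−1−h)·gap*/(2H). -/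
/-! The Q-functions of `(P̃, r̃)` and `(P*, r)` under a fixed policy satisfy a one-step
recursion: their difference at stage `h` is the reward error, plus the transition error
integrated against the perturbed value at stage `h + 1` (which lies in `[0, H - h - 1]`, so after
centering it costs at most `‖ΔP‖₁ (H - h - 1) / 2`), plus the `P*`-average of the difference at
stage `h + 1`. The closeness assumptions make every stage cost exactly `gap* / (2H)`. -/

section FiniteSums

variable {S : Type*} [Fintype S]

lemma IsPMF.sum_mul_mem_Icc {p f : S → ℝ} {M : ℝ} (hp : IsPMF p)
    (hf : ∀ s, f s ∈ Set.Icc 0 M) : ∑ s, p s * f s ∈ Set.Icc 0 M := by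
  refine ⟨Finset.sum_nonneg fun s _ => mul_nonneg (hp.1 s) (hf s).1, ?_⟩
  calc ∑ s, p s * f s ≤ ∑ s, p s * M :=
        Finset.sum_le_sum fun s _ => mul_le_mul_of_nonneg_left (hf s).2 (hp.1 s)
    _ = M := by rw [← Finset.sum_mul, hp.2, one_mul]

lemma IsPMF.abs_sum_mul_sub_sum_mul_le {p f g : S → ℝ} {ε : ℝ} (hp : IsPMF p)
    (hfg : ∀ s, |f s - g s| ≤ ε) : |∑ s, p s * f s - ∑ s, p s * g s| ≤ ε := by
  calc |∑ s, p s * f s - ∑ s, p s * g s| = |∑ s, p s * (f s - g s)| := by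
        simp only [mul_sub, Finset.sum_sub_distrib]
    _ ≤ ∑ s, |p s * (f s - g s)| := Finset.abs_sum_le_sum_abs _ _
    _ ≤ ∑ s, p s * ε := Finset.sum_le_sum fun s _ => by
        rw [abs_mul, abs_of_nonneg (hp.1 s)]
        exact mul_le_mul_of_nonneg_left (hfg s) (hp.1 s)
    _ = ε := by rw [← Finset.sum_mul, hp.2, one_mul]

lemma abs_sum_mul_sub_sum_mul_le_l1dist {p q f : S → ℝ} {M : ℝ} (hpq : ∑ s, p s = ∑ s, q s)
    (hf : ∀ s, f s ∈ Set.Icc 0 M) :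
    |∑ s, p s * f s - ∑ s, q s * f s| ≤ l1dist p q * (M / 2) := by
  -- equal masses let us center `f` at `M / 2`, where `|f - M / 2| ≤ M / 2`
  have hcenter : ∑ s, p s * f s - ∑ s, q s * f s = ∑ s, (p s - q s) * (f s - M / 2) := by
    simp only [sub_mul, mul_sub, Finset.sum_sub_distrib, ← Finset.sum_mul, hpq]
    ring
  rw [hcenter, l1dist, Finset.sum_mul]
  refine (Finset.abs_sum_le_sum_abs _ _).trans (Finset.sum_le_sum fun s _ => ?_)
  rw [abs_mul]
  refine mul_le_mul_of_nonneg_left (abs_le.2 ⟨?_, ?_⟩) (abs_nonneg _)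
  · linarith [(hf s).1]
  · linarith [(hf s).2]

end FiniteSums

section PolicyValues

variable {S A : Type*} [Fintype S] (P : ℕ → S → A → S → ℝ) (r : ℕ → S → A → ℝ)
  (pol : ℕ → S → A) {H : ℕ}

lemma Vpi_mem_Icc (hP : ∀ h, h + 1 < H → ∀ s a, IsPMF (P h s a))
    (hr : ∀ h, h < H → ∀ s a, r h s a ∈ Set.Icc (0 : ℝ) 1) :
    ∀ t h, h + t ≤ H → ∀ s, Vpi P r pol t h s ∈ Set.Icc (0 : ℝ) t := by
  intro t
  induction t with
  | zero => intro h _ s; simp [Vpi]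
  | succ t ih =>
    intro h hht s
    have hnext : ∑ s', P h s (pol h s) s' * Vpi P r pol t (h + 1) s' ∈ Set.Icc (0 : ℝ) t := by
      rcases t with _ | t
      · simp [Vpi]
      · exact (hP h (by omega) s (pol h s)).sum_mul_mem_Icc fun s' => ih (h + 1) (by omega) s'
    obtain ⟨hr0, hr1⟩ := hr h (by omega) s (pol h s)
    rw [Vpi]
    push_cast
    exact ⟨by linarith [hnext.1], by linarith [hnext.2]⟩

lemma Vpi_eq_Qpi {h : ℕ} (hh : h < H) (s : S) :
    Vpi P r pol (H - h) h s = Qpi P r pol H h s (pol h s) := by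
  rw [show H - h = H - (h + 1) + 1 by omega, Vpi, Qpi]

lemma Qpi_last (s : S) (a : A) : Qpi P r pol H (H - 1) s a = r (H - 1) s a := by
  simp [Qpi, show H - (H - 1 + 1) = 0 by omega, Vpi]

lemma abs_Qpi_sub_Qpi_le {Pt : ℕ → S → A → S → ℝ} {rt : ℕ → S → A → ℝ}
    (hPt : ∀ h, h + 1 < H → ∀ s a, IsPMF (Pt h s a))
    (hrt : ∀ h, h < H → ∀ s a, rt h s a ∈ Set.Icc (0 : ℝ) 1)
    {h : ℕ} (hh : h + 1 < H) {s : S} {a : A} (hP : IsPMF (P h s a)) {ε : ℝ}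
    (hnext : ∀ s', |Qpi Pt rt pol H (h + 1) s' (pol (h + 1) s')
      - Qpi P r pol H (h + 1) s' (pol (h + 1) s')| ≤ ε) :
    |Qpi Pt rt pol H h s a - Qpi P r pol H h s a|
      ≤ |rt h s a - r h s a| + l1dist (Pt h s a) (P h s a) * (((H : ℝ) - h - 1) / 2) + ε := by
  set Vt := fun s' => Vpi Pt rt pol (H - (h + 1)) (h + 1) s'
  set V := fun s' => Vpi P r pol (H - (h + 1)) (h + 1) s'
  have hVt : ∀ s', Vt s' ∈ Set.Icc 0 ((H : ℝ) - h - 1) := fun s' => by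
    have := Vpi_mem_Icc Pt rt pol hPt hrt (H - (h + 1)) (h + 1) (by omega) s'
    rwa [Nat.cast_sub hh.le, Nat.cast_add, Nat.cast_one, ← sub_sub] at this
  have hdiff : ∀ s', |Vt s' - V s'| ≤ ε := fun s' => by
    simpa only [Vt, V, Vpi_eq_Qpi _ _ _ hh] using hnext s'
  have hsplit : Qpi Pt rt pol H h s a - Qpi P r pol H h s a
      = (rt h s a - r h s a) + (∑ s', Pt h s a s' * Vt s' - ∑ s', P h s a s' * Vt s')
        + (∑ s', P h s a s' * Vt s' - ∑ s', P h s a s' * V s') := by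
    simp only [Qpi, Vt, V]
    ring
  have htransition :=
    abs_sum_mul_sub_sum_mul_le_l1dist (q := P h s a) (by rw [(hPt h hh s a).2, hP.2]) hVt
  have hcontinuation := hP.abs_sum_mul_sub_sum_mul_le hdiff
  rw [hsplit]
  refine (abs_add_le _ _).trans ?_
  linarith [abs_add_le (rt h s a - r h s a) (∑ s', Pt h s a s' * Vt s' - ∑ s', P h s a s' * Vt s')]

end PolicyValues

theorem Q_perturbation_bound_general
    {𝒮 𝒜 : Type*} [Fintype 𝒮]
    (H : ℕ)
    (Pstar : ℕ → 𝒮 → 𝒜 → 𝒮 → ℝ) (r : ℕ → 𝒮 → 𝒜 → ℝ)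
    (Pt : ℕ → 𝒮 → 𝒜 → 𝒮 → ℝ) (rt : ℕ → 𝒮 → 𝒜 → ℝ)
    (hPstar : ∀ h, h + 1 < H → ∀ s a, IsPMF (Pstar h s a))
    (hPt : ∀ h, h + 1 < H → ∀ s a, IsPMF (Pt h s a))
    (hrt : ∀ h, h < H → ∀ s a, rt h s a ∈ Set.Icc (0 : ℝ) 1)
    (gapstar : ℝ)
    (hPclose : ∀ h, h + 1 < H → ∀ s a,
      l1dist (Pt h s a) (Pstar h s a) ≤ gapstar / (2 * H * ((H : ℝ) - h - 1)))
    (hrclose : ∀ h, h + 1 < H → ∀ s a,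
      |rt h s a - r h s a| ≤ gapstar / (4 * H))
    (hrlast : ∀ s a, rt (H - 1) s a = r (H - 1) s a) :
    ∀ (pol : ℕ → 𝒮 → 𝒜) (h : ℕ), h < H → ∀ s a,
      |Qpi Pt rt pol H h s a - Qpi Pstar r pol H h s a|
        ≤ ((H : ℝ) - 1 - h) * gapstar / (2 * H) := by
  intro pol h hh
  induction Nat.le_sub_one_of_lt hh using Nat.decreasingInduction with
  | self => intro s a; simp [Qpi_last, hrlast, Nat.cast_sub (show 1 ≤ H by omega)]
  | of_succ k hk ih =>
    intro s a
    have hk1 : k + 1 < H := by omega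
    have hstep := abs_Qpi_sub_Qpi_le Pstar r pol hPt hrt hk1 (hPstar k hk1 s a)
      fun s' => ih (by omega) s' (pol (k + 1) s')
    have hHk : (0 : ℝ) < (H : ℝ) - k - 1 := by
      rw [sub_sub, sub_pos]; exact_mod_cast hk1
    have htransition := mul_le_mul_of_nonneg_right (hPclose k hk1 s a) (half_pos hHk).le
    have hcost : gapstar / (2 * H * ((H : ℝ) - k - 1)) * (((H : ℝ) - k - 1) / 2)
        = gapstar / (4 * H) := by
      field_simp
      ring
    have hreward := hrclose k hk1 s a
    have hsum : gapstar / (4 * H) + gapstar / (4 * H)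
        + ((H : ℝ) - 1 - (k + 1)) * gapstar / (2 * H) = ((H : ℝ) - 1 - k) * gapstar / (2 * H) := by
      field_simp
      ring
    push_cast at hstep
    linarith

/-- Q-value perturbation bound, Eq. (upperBoundQFinalTemp) in the paper.
Under the gap-relative closeness conditions, for every deterministic Markov policy the
action-value functions of the perturbed and true MDPs differ by at most
`(H−1−h)·gap*/(2H)`. -/
theorem Q_perturbation_bound
    {𝒮 𝒜 : Type*} [Fintype 𝒮] [Fintype 𝒜] [Nonempty 𝒮] [Nonempty 𝒜]
    (H : ℕ) (hH : 1 ≤ H)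
    (Pstar : ℕ → 𝒮 → 𝒜 → 𝒮 → ℝ) (r : ℕ → 𝒮 → 𝒜 → ℝ)
    (Pt : ℕ → 𝒮 → 𝒜 → 𝒮 → ℝ) (rt : ℕ → 𝒮 → 𝒜 → ℝ)
    (hPstar : ∀ h, h + 1 < H → ∀ s a, IsPMF (Pstar h s a))
    (hPt : ∀ h, h + 1 < H → ∀ s a, IsPMF (Pt h s a))
    (hr : ∀ h, h < H → ∀ s a, r h s a ∈ Set.Icc (0 : ℝ) 1)
    (hrt : ∀ h, h < H → ∀ s a, rt h s a ∈ Set.Icc (0 : ℝ) 1)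
    (gapstar : ℝ) (hgap_pos : 0 < gapstar)
    (hgap : ∀ h, h < H → ∀ s a, a ∉ OptActions Pstar r H h s →
      gapstar ≤ (⨆ a', Qstar Pstar r H h s a') - Qstar Pstar r H h s a)
    (hPclose : ∀ h, h + 1 < H → ∀ s a,
      l1dist (Pt h s a) (Pstar h s a) ≤ gapstar / (2 * H * ((H : ℝ) - h - 1)))
    (hrclose : ∀ h, h + 1 < H → ∀ s a,
      |rt h s a - r h s a| ≤ gapstar / (4 * H))
    (hrlast : ∀ s a, rt (H - 1) s a = r (H - 1) s a) :
    ∀ (pol : ℕ → 𝒮 → 𝒜) (h : ℕ), h < H → ∀ s a,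
      |Qpi Pt rt pol H h s a - Qpi Pstar r pol H h s a|
        ≤ ((H : ℝ) - 1 - h) * gapstar / (2 * H) :=
  Q_perturbation_bound_general H Pstar r Pt rt hPstar hPt hrt gapstar hPclose hrclose hrlast
end

section
/- Let (𝒮, 𝒜, P*, r, H) be a finite-horizon MDP, let P̂_h(·|s,a) be probability mass functions on 𝒮 for h ∈ {0,…,H−2}, and let b_h(s,a) ≥ 0 satisfy b_h(s,a) ≥ ((H−h−1)/2)·‖P̂_h(·|s,a) − P*_h(·|s,a)‖₁ for all 0 ≤ h ≤ H−2 and all (s,a). Let Q̂, V̂ be the truncated optimistic value iteration: V̂_H ≡ 0, Q̂_h(s,a) = min{ r_h(s,a) + ∑_{s'} P̂_h(s'|s,a)·V̂_{h+1}(s') + b_h(s,a), H−h }, V̂_h(s) = max_a Q̂_h(s,a), and let π be any greedy policy, i.e., π_h(s) ∈ argmax_a Q̂_h(s,a) for all (s,h). Then for every h ∈ {0,…,H−2} and every state s, writing a = π_h(s): V̂_h(s) − V_h^{π,P*,r}(s) ≤ 2·b_h(s,a) + ∑_{s'} P*_h(s'|s,a)·( V̂_{h+1}(s') − V_{h+1}^{π,P*,r}(s')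 ). -/
/-- Truncated optimistic value iteration, by backward recursion on the number `t`
of remaining steps; the optimistic value at stage `h` with horizon `H` is
`VhatAux P r b H (H - h) h`. -/
noncomputable def VhatAux {S A : Type*} [Fintype S] [Fintype A] [Nonempty A]
    (P : ℕ → S → A → S → ℝ) (r b : ℕ → S → A → ℝ) (H : ℕ) :
    ℕ → ℕ → S → ℝ
  | 0, _, _ => 0
  | t + 1, h, s =>
      ⨆ a : A,
        min (r h s a + (∑ s' : S, P h s a s' * VhatAux P r b H t (h + 1) s') + b h s a)
          ((H : ℝ) - h)

/-- Truncated optimistic action-value function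
`Q̂_h(s,a) = min{ r_h(s,a) + ∑_{s'} P̂_h(s'|s,a)·V̂_{h+1}(s') + b_h(s,a), H−h }`. -/
noncomputable def Qhat {S A : Type*} [Fintype S] [Fintype A] [Nonempty A]
    (P : ℕ → S → A → S → ℝ) (r b : ℕ → S → A → ℝ) (H h : ℕ) (s : S) (a : A) : ℝ :=
  min (r h s a + (∑ s' : S, P h s a s' * VhatAux P r b H (H - (h + 1)) (h + 1) s') + b h s a)
    ((H : ℝ) - h)

/-- Truncated optimistic value function `V̂_h(s) = max_a Q̂_h(s,a)`. -/
noncomputable def Vhat {S A : Type*} [Fintype S] [Fintype A] [Nonempty A]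
    (P : ℕ → S → A → S → ℝ) (r b : ℕ → S → A → ℝ) (H h : ℕ) (s : S) : ℝ :=
  VhatAux P r b H (H - h) h s


/-!
Greediness gives `V̂_h(s) ≤ r + P̂ V̂_{h+1} + b` at `a = π_h(s)`, while `V^π_h(s) = r + P* V^π_{h+1}`.
The difference is therefore `b + (P̂ - P*) V̂_{h+1} + P* (V̂_{h+1} - V^π_{h+1})`, and the middle
term is at most `b` as well: `P̂ - P*` has total mass zero and `V̂_{h+1}` takes values in an
interval of length `H - h - 1`, so it is at most half that length times `‖P̂ - P*‖₁`.
-/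

section OptimisticValues

variable {S A : Type*} [Fintype S] [Fintype A] [Nonempty A]
  (P : ℕ → S → A → S → ℝ) (r b : ℕ → S → A → ℝ) (H : ℕ)

lemma vhatAux_nonneg (hP : ∀ h, h + 1 < H → ∀ s a s', 0 ≤ P h s a s')
    (hr : ∀ h, h < H → ∀ s a, 0 ≤ r h s a) (hb : ∀ h, h < H → ∀ s a, 0 ≤ b h s a) :
    ∀ t h, h + t ≤ H → ∀ s, 0 ≤ VhatAux P r b H t h s := by
  intro t
  induction t with
  | zero => simp [VhatAux]
  | succ t ih =>
    intro h hht s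
    have hhH : h < H := by omega
    have hnext : ∀ s' a, 0 ≤ P h s a s' * VhatAux P r b H t (h + 1) s' := by
      intro s' a
      cases t with
      | zero => simp [VhatAux]
      | succ t => exact mul_nonneg (hP h (by omega) s a s') (ih (h + 1) (by omega) s')
    obtain ⟨a⟩ := ‹Nonempty A›
    rw [VhatAux]
    refine le_ciSup_of_le (Set.finite_range _).bddAbove a (le_min ?_ ?_)
    · have := Finset.sum_nonneg fun s' (_ : s' ∈ Finset.univ) => hnext s' a
      linarith [hr h hhH s a, hb h hhH s a]
    · simpa using hhH.le

lemma vhatAux_le_sub {h : ℕ} (hh : h ≤ H) (t : ℕ) (s : S) :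
    VhatAux P r b H t h s ≤ (H : ℝ) - h := by
  cases t with
  | zero => simpa [VhatAux] using hh
  | succ t => exact ciSup_le fun a => min_le_right _ _

lemma vhat_mem_Icc (hP : ∀ h, h + 1 < H → ∀ s a s', 0 ≤ P h s a s')
    (hr : ∀ h, h < H → ∀ s a, 0 ≤ r h s a) (hb : ∀ h, h < H → ∀ s a, 0 ≤ b h s a)
    {h : ℕ} (hh : h ≤ H) (s : S) :
    Vhat P r b H h s ∈ Set.Icc 0 ((H : ℝ) - h) :=
  ⟨vhatAux_nonneg P r b H hP hr hb _ h (by omega) s, vhatAux_le_sub P r b H hh _ s⟩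

lemma vhat_eq_iSup_qhat {h : ℕ} (hh : h < H) (s : S) :
    Vhat P r b H h s = ⨆ a, Qhat P r b H h s a := by
  rw [Vhat, show H - h = H - (h + 1) + 1 by omega, VhatAux]
  rfl

lemma qhat_le (h : ℕ) (s : S) (a : A) :
    Qhat P r b H h s a ≤ r h s a + ∑ s', P h s a s' * Vhat P r b H (h + 1) s' + b h s a :=
  min_le_left _ _

end OptimisticValues

lemma vpi_eq_qpi {S A : Type*} [Fintype S] (P : ℕ → S → A → S → ℝ) (r : ℕ → S → A → ℝ)
    (pol : ℕ → S → A) {H h : ℕ} (hh : h < H) (s : S) :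
    Vpi P r pol (H - h) h s = Qpi P r pol H h s (pol h s) := by
  rw [show H - h = H - (h + 1) + 1 by omega, Vpi, Qpi]

lemma sum_sub_mul_le_l1dist {S : Type*} [Fintype S] {p q f : S → ℝ} {lo hi : ℝ}
    (hpq : ∑ s, p s = ∑ s, q s) (hf : ∀ s, f s ∈ Set.Icc lo hi) :
    ∑ s, (p s - q s) * f s ≤ (hi - lo) / 2 * l1dist p q := by
  set m := (lo + hi) / 2 with hm
  have hmass : ∑ s, (p s - q s) * m = 0 := by
    rw [← Finset.sum_mul, Finset.sum_sub_distrib, hpq, sub_self, zero_mul]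
  have hcentre : ∀ s, |f s - m| ≤ (hi - lo) / 2 := fun s => by
    obtain ⟨h1, h2⟩ := hf s
    rw [abs_le]; constructor <;> linarith [hm]
  calc ∑ s, (p s - q s) * f s = ∑ s, (p s - q s) * (f s - m) := by
        simp only [mul_sub, Finset.sum_sub_distrib, hmass, sub_zero]
    _ ≤ ∑ s, |p s - q s| * ((hi - lo) / 2) := Finset.sum_le_sum fun s _ =>
        (le_abs_self _).trans <| by
          rw [abs_mul]; exact mul_le_mul_of_nonneg_left (hcentre s) (abs_nonneg _)
    _ = (hi - lo) / 2 * l1dist p q := by rw [l1dist, ← Finset.sum_mul, mul_comm]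

theorem one_step_regret_decomposition_general
    {𝒮 𝒜 : Type*} [Fintype 𝒮] [Fintype 𝒜] [Nonempty 𝒮] [Nonempty 𝒜]
    (H : ℕ)
    (Pstar : ℕ → 𝒮 → 𝒜 → 𝒮 → ℝ) (r : ℕ → 𝒮 → 𝒜 → ℝ)
    (Phat : ℕ → 𝒮 → 𝒜 → 𝒮 → ℝ) (b : ℕ → 𝒮 → 𝒜 → ℝ)
    (hPstar : ∀ h, h + 1 < H → ∀ s a, IsPMF (Pstar h s a))
    (hPhat : ∀ h, h + 1 < H → ∀ s a, IsPMF (Phat h s a))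
    (hr : ∀ h, h < H → ∀ s a, r h s a ∈ Set.Icc (0 : ℝ) 1)
    (hb0 : ∀ h, h < H → ∀ s a, 0 ≤ b h s a)
    (hb : ∀ h, h + 1 < H → ∀ s a,
      ((H : ℝ) - h - 1) / 2 * l1dist (Phat h s a) (Pstar h s a) ≤ b h s a)
    (pol : ℕ → 𝒮 → 𝒜)
    (hgreedy : ∀ h, h < H → ∀ s a,
      Qhat Phat r b H h s a ≤ Qhat Phat r b H h s (pol h s)) :
    ∀ h, h + 1 < H → ∀ s,
      Vhat Phat r b H h s - Vpi Pstar r pol (H - h) h s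
        ≤ 2 * b h s (pol h s) +
          ∑ s', Pstar h s (pol h s) s' *
            (Vhat Phat r b H (h + 1) s' - Vpi Pstar r pol (H - (h + 1)) (h + 1) s') := by
  intro h hhH s
  have hopt : Vhat Phat r b H h s
      ≤ r h s (pol h s) + ∑ s', Phat h s (pol h s) s' * Vhat Phat r b H (h + 1) s'
        + b h s (pol h s) := by
    rw [vhat_eq_iSup_qhat Phat r b H (by omega)]
    exact (ciSup_le (hgreedy h (by omega) s)).trans (qhat_le Phat r b H h s _)
  have hval := vpi_eq_qpi Pstar r pol (show h < H by omega) s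
  have hrange : ∀ s', Vhat Phat r b H (h + 1) s' ∈ Set.Icc 0 ((H : ℝ) - h - 1) := fun s' => by
    simpa [sub_sub] using vhat_mem_Icc Phat r b H (fun h hh s a => (hPhat h hh s a).1)
      (fun h hh s a => (hr h hh s a).1) hb0 (h := h + 1) hhH.le s'
  have hdev := (sum_sub_mul_le_l1dist (p := Phat h s (pol h s)) (q := Pstar h s (pol h s))
    (by rw [(hPhat h hhH s _).2, (hPstar h hhH s _).2]) hrange).trans
      (by simpa using hb h hhH s (pol h s))
  rw [hval, Qpi]
  simp only [sub_mul, mul_sub, Finset.sum_sub_distrib] at hdev ⊢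
  linarith

/-- one-step regret decomposition for the greedy policy.
For a greedy policy with respect to the truncated optimistic values, the gap between
the optimistic value and the true value of the greedy policy at stage `h` is at most
twice the bonus plus the expected gap at stage `h+1`. -/
theorem one_step_regret_decomposition
    {𝒮 𝒜 : Type*} [Fintype 𝒮] [Fintype 𝒜] [Nonempty 𝒮] [Nonempty 𝒜]
    (H : ℕ) (hH : 1 ≤ H)
    (Pstar : ℕ → 𝒮 → 𝒜 → 𝒮 → ℝ) (r : ℕ → 𝒮 → 𝒜 → ℝ)
    (Phat : ℕ → 𝒮 → 𝒜 → 𝒮 → ℝ) (b : ℕ → 𝒮 → 𝒜 → ℝ)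
    (hPstar : ∀ h, h + 1 < H → ∀ s a, IsPMF (Pstar h s a))
    (hPhat : ∀ h, h + 1 < H → ∀ s a, IsPMF (Phat h s a))
    (hr : ∀ h, h < H → ∀ s a, r h s a ∈ Set.Icc (0 : ℝ) 1)
    (hb0 : ∀ h, h < H → ∀ s a, 0 ≤ b h s a)
    (hb : ∀ h, h + 1 < H → ∀ s a,
      ((H : ℝ) - h - 1) / 2 * l1dist (Phat h s a) (Pstar h s a) ≤ b h s a)
    (pol : ℕ → 𝒮 → 𝒜)
    (hgreedy : ∀ h, h < H → ∀ s a,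
      Qhat Phat r b H h s a ≤ Qhat Phat r b H h s (pol h s)) :
    ∀ h, h + 1 < H → ∀ s,
      Vhat Phat r b H h s - Vpi Pstar r pol (H - h) h s
        ≤ 2 * b h s (pol h s) +
          ∑ s', Pstar h s (pol h s) s' *
            (Vhat Phat r b H (h + 1) s' - Vpi Pstar r pol (H - (h + 1)) (h + 1) s') :=
  one_step_regret_decomposition_general H Pstar r Phat b hPstar hPhat hr hb0 hb pol hgreedy
end
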